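/- arXiv:2312.05242 — 6 statements merged into one kernel-verified Lean document; each statement's English description precedes it below -/
import Mathlib

section
/- For a hypergraph G and an independent subset s of G, the connected component of the graph Γ_G containing s consists exactly of those independent subsets t of G whose symmetric difference with s is finite. Here Γ_G is the graph whose vertices are independent subsets of G, with two subsets adjacent iff their symmetric difference has exactly one element. -/
open scoped symmDiff

variable {V : Type*}

def Indep (E : Set (Finset V)) (s : Set V) : Prop := ∀ e ∈ E, ¬ ((e : Set V) ⊆ s)

def SimpleHG (E : Set (Finset V)) : Prop :=
  (∀ e ∈ E, 1 < e.card) ∧ ∀ e ∈ E, ∀ e' ∈ E, e ⊆ e' → e = e'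

def LocFin (E : Set (Finset V)) : Prop := ∀ v : V, {e ∈ E | v ∈ e}.Finite

def Nbr (E : Set (Finset V)) (v w : V) : Prop := ∃ e ∈ E, v ∈ e ∧ w ∈ e

def Gamma (E : Set (Finset V)) : SimpleGraph {s : Set V // Indep E s} where
  Adj s t := ∃ v, s.1 ∆ t.1 = {v}
  symm := ⟨fun s t ⟨v, h⟩ => ⟨v, by rwa [symmDiff_comm]⟩⟩
  loopless := ⟨fun s ⟨v, h⟩ => by
    rw [symmDiff_self] at h
    exact absurd h.symm (Set.singleton_ne_empty v)⟩

def Comp (E : Set (Finset V)) (s : Set V) : Set {t : Set V // Indep E t} :=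
  {t | (s ∆ t.1).Finite}

def GammaComp (E : Set (Finset V)) (s : Set V) : SimpleGraph (Comp E s) :=
  (Gamma E).induce (Comp E s)

def xset (E : Set (Finset V)) (s : Set V) (v : V) : Set V :=
  s \ insert v {w | Nbr E v w}

def yset (E : Set (Finset V)) (s : Set V) (v : V) : Set V :=
  insert v (xset E s v)

def IsIsoHG {V W : Type*} (ES : Set (Finset V)) (ET : Set (Finset W)) (f : V → W) : Prop :=
  Function.Bijective f ∧ ∀ e : Finset V, e ∈ ES ↔ ∃ e' ∈ ET, (e' : Set W) = f '' (e : Set V)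

/-
Each edge of Γ_G changes one element, so the symmetric difference along a walk stays finite.
Conversely, deleting the finitely many elements of s \ t one at a time walks from s down
to s ∩ t through subsets of s, which are independent, and likewise from t; both walks meet
at s ∩ t.
-/

theorem Indep.mono {E : Set (Finset V)} {s t : Set V} (ht : Indep E t) (h : s ⊆ t) :
    Indep E s :=
  fun e he hes => ht e he (hes.trans h)

namespace Gamma

variable {E : Set (Finset V)}

theorem finite_symmDiff_of_walk {a b : {s : Set V // Indep E s}} (w : (Gamma E).Walk a b) :
    (a.1 ∆ b.1).Finite := by
  induction w with
  | nil => simp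
  | cons hadj _ ih =>
    obtain ⟨v, hv⟩ := hadj
    exact ((hv ▸ Set.finite_singleton v).union ih).subset (symmDiff_triangle _ _ _)

theorem adj_diff_insert {w : Set V} (hw : Indep E w) {F : Set V} {x : V} (hxw : x ∈ w)
    (hxF : x ∉ F) :
    (Gamma E).Adj ⟨w \ insert x F, hw.mono Set.sdiff_subset⟩
      ⟨w \ F, hw.mono Set.sdiff_subset⟩ := by
  refine ⟨x, ?_⟩
  dsimp only
  rw [symmDiff_of_le (Set.sdiff_subset_sdiff_right (Set.subset_insert x F))]
  ext y
  simp only [Set.mem_sdiff, Set.mem_insert_iff, Set.mem_singleton_iff]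
  constructor
  · rintro ⟨⟨hyw, hyF⟩, hy⟩
    by_contra hyx
    exact hy ⟨hyw, by tauto⟩
  · rintro rfl
    exact ⟨⟨hxw, hxF⟩, fun h => h.2 (Or.inl rfl)⟩

theorem reachable_diff_finite {w : Set V} (hw : Indep E w) {F : Set V} (hF : F.Finite) :
    (Gamma E).Reachable ⟨w \ F, hw.mono Set.sdiff_subset⟩ ⟨w, hw⟩ := by
  induction F, hF using Set.Finite.induction_on with
  | empty => simp only [Set.sdiff_empty]; rfl
  | @insert x F hxF _ ih =>
    by_cases hxw : x ∈ w
    · exact (adj_diff_insert hw hxw hxF).reachable.trans ih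
    · have hsame : w \ insert x F = w \ F := by
        rw [Set.insert_eq, ← Set.sdiff_sdiff, Set.sdiff_singleton_eq_self hxw]
      simp only [hsame]
      exact ih

end Gamma

theorem stmt0 (E : Set (Finset V)) (s t : Set V) (hs : Indep E s) (ht : Indep E t) :
    (Gamma E).Reachable ⟨s, hs⟩ ⟨t, ht⟩ ↔ (s ∆ t).Finite := by
  refine ⟨fun ⟨w⟩ => Gamma.finite_symmDiff_of_walk w, fun hfin => ?_⟩
  have hst : (s \ t).Finite := hfin.subset (le_sup_left.trans_eq (symmDiff_def s t).symm)
  have hts : (t \ s).Finite := hfin.subset (le_sup_right.trans_eq (symmDiff_def s t).symm)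
  have hs_meet := Gamma.reachable_diff_finite hs hst
  have ht_meet := Gamma.reachable_diff_finite ht hts
  have hmeet : s \ (s \ t) = t \ (t \ s) := by
    rw [Set.sdiff_sdiff_right_self, Set.sdiff_sdiff_right_self, Set.inter_comm]
  simp only [hmeet] at hs_meet
  exact hs_meet.symm.trans ht_meet
end

section
/- Let S and T be simple, locally finite hypergraphs, s and t independent subsets, and g an isomorphism from the connected component Γ_S(s) to the connected component Γ_T(t). Suppose that for some vertex v of S, g(x_s(v)) ⊕ g(y_s(v)) = {f(v)} defines f(v). Then for all a, b in Γ_S(s) with a ⊕ b = {v}, one has g(a) ⊕ g(b) = {f(v)}. That is, the single vertex by which g(a) and g(b) differ depends only on v, not on the pair (a,b). -/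
open scoped symmDiff

variable {V : Type*}

/-!
If `a ∆ b = {v}` and `a ∆ c = {w}` with `v ≠ w`, then `a, b, c, d` with `d = c ∆ {v}` form a
4-cycle in `Γ`; its image under `g` is a 4-cycle of singleton steps, and comparing
`(g a ∆ g b) ∆ (g c ∆ g d) = (g a ∆ g c) ∆ (g b ∆ g d)` gives `{p} ∆ {p'} = {q} ∆ {r}` for the
four edge labels. If `p ≠ p'`, then `p = q` or `p = r`, which would identify two opposite corners
of the image cycle, contradicting injectivity of `g`; so opposite edges carry the same label.

Every edge `(a, insert v a)` of the component can be moved to `(xset s v, yset s v)` by such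
squares, one vertex of `a ∆ xset s v` at a time, always staying inside independent sets: a vertex
of `a` outside `xset s v` is removed, and once `a ⊆ xset s v` a missing vertex is added, which is
allowed because `insert v (xset s v)` is independent.
-/

section Sets

variable {β : Type*}

theorem insert_eq_symmDiff_singleton {a : Set β} {v : β} (hv : v ∉ a) :
    insert v a = a ∆ {v} := by
  rw [Disjoint.symmDiff_eq_sup (Set.disjoint_singleton_right.2 hv)]
  exact Set.union_singleton.symm

theorem symmDiff_insert_of_notMem {a : Set β} {v : β} (hv : v ∉ a) : a ∆ insert v a = {v} := by
  rw [insert_eq_symmDiff_singleton hv, symmDiff_symmDiff_cancel_left]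

theorem eq_insert_of_symmDiff_eq_singleton {a b : Set β} {v : β} (hv : v ∉ a)
    (h : a ∆ b = {v}) : b = insert v a := by
  rw [insert_eq_symmDiff_singleton hv, ← h, symmDiff_symmDiff_cancel_left]

theorem eq_of_symmDiff_square {A B C D : Set β} {p p' q r : β}
    (hAB : A ∆ B = {p}) (hCD : C ∆ D = {p'}) (hAC : A ∆ C = {q}) (hBD : B ∆ D = {r})
    (hBC : B ≠ C) (hAD : A ≠ D) : p = p' := by
  by_contra hne
  have key : ({p} : Set β) ∆ {p'} = {q} ∆ {r} := by
    rw [← hAB, ← hCD, ← hAC, ← hBD, symmDiff_symmDiff_symmDiff_comm]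
  have hp : p ∈ ({q} : Set β) ∆ {r} := by
    rw [← key]
    simp [Set.mem_symmDiff, hne]
  rcases hp with ⟨rfl, -⟩ | ⟨rfl, -⟩
  · exact hBC (symmDiff_right_injective A (hAB.trans hAC.symm))
  · exact hAD (symmDiff_left_injective B (hAB.trans (hBD.symm.trans (symmDiff_comm _ _))))

end Sets

section Hypergraph

variable {E : Set (Finset V)}

theorem Indep.subset {a b : Set V} (hb : Indep E b) (hab : a ⊆ b) : Indep E a :=
  fun e he hea => hb e he (hea.trans hab)

theorem notMem_xset (s : Set V) (v : V) : v ∉ xset E s v :=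
  fun h => h.2 (Set.mem_insert v _)

theorem finite_symmDiff_of_mem_comp {s : Set V} {a b : {u : Set V // Indep E u}}
    (ha : a ∈ Comp E s) (hb : b ∈ Comp E s) : (a.1 ∆ b.1).Finite :=
  (Set.Finite.symmDiff_congr ha).1 hb

theorem mem_comp_of_finite_symmDiff {s : Set V} (a : Comp E s) {b : {u : Set V // Indep E u}}
    (h : (a.1.1 ∆ b.1).Finite) : b ∈ Comp E s :=
  (Set.Finite.union a.2 h).subset (symmDiff_triangle _ _ _)

theorem exists_mem_symmDiff_indep_insert {a x : Set V} {v : V} (hva : v ∉ a) (hvx : v ∉ x)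
    (ha : Indep E (insert v a)) (hx : Indep E (insert v x)) (hne : a ≠ x) :
    ∃ w ∈ a ∆ x, w ≠ v ∧ Indep E (insert v (a ∆ {w})) := by
  by_cases hax : a ⊆ x
  · obtain ⟨w, hwx, hwa⟩ := Set.exists_of_ssubset (hax.ssubset_of_ne hne)
    refine ⟨w, Or.inr ⟨hwx, hwa⟩, ne_of_mem_of_not_mem hwx hvx,
      hx.subset (Set.insert_subset_insert ?_)⟩
    rintro u (⟨hua, -⟩ | ⟨rfl, -⟩)
    exacts [hax hua, hwx]
  · obtain ⟨w, hwa, hwx⟩ := Set.not_subset.1 hax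
    refine ⟨w, Or.inl ⟨hwa, hwx⟩, ne_of_mem_of_not_mem hwa hva,
      ha.subset (Set.insert_subset_insert ?_)⟩
    rintro u (⟨hua, -⟩ | ⟨rfl, hwa'⟩)
    exacts [hua, absurd hwa hwa']

end Hypergraph

section Isomorphism

variable {VS VT : Type*} {ES : Set (Finset VS)} {ET : Set (Finset VT)} {s : Set VS} {t : Set VT}
  (g : GammaComp ES s ≃g GammaComp ET t)

theorem symmDiff_map_eq_of_square {a b c d : Comp ES s} {v w : VS}
    (hab : a.1.1 ∆ b.1.1 = {v}) (hcd : c.1.1 ∆ d.1.1 = {v}) (hac : a.1.1 ∆ c.1.1 = {w})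
    (hvw : v ≠ w) : (g a).1.1 ∆ (g b).1.1 = (g c).1.1 ∆ (g d).1.1 := by
  have hbd : b.1.1 ∆ d.1.1 = {w} := by
    have h := symmDiff_symmDiff_symmDiff_comm a.1.1 b.1.1 c.1.1 d.1.1
    rw [hab, hcd, hac, symmDiff_self, eq_comm, symmDiff_eq_bot] at h
    exact h.symm
  have hbc : (g b).1.1 ≠ (g c).1.1 := fun h => by
    obtain rfl := g.injective (Subtype.ext (Subtype.ext h))
    exact hvw (Set.singleton_injective (hab.symm.trans hac))
  have had : (g a).1.1 ≠ (g d).1.1 := fun h => by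
    obtain rfl := g.injective (Subtype.ext (Subtype.ext h))
    exact hvw (Set.singleton_injective (hcd.symm.trans ((symmDiff_comm _ _).trans hac)))
  obtain ⟨p, hp⟩ : ∃ p, (g a).1.1 ∆ (g b).1.1 = {p} := g.map_adj_iff.2 ⟨v, hab⟩
  obtain ⟨p', hp'⟩ : ∃ p, (g c).1.1 ∆ (g d).1.1 = {p} := g.map_adj_iff.2 ⟨v, hcd⟩
  obtain ⟨q, hq⟩ : ∃ q, (g a).1.1 ∆ (g c).1.1 = {q} := g.map_adj_iff.2 ⟨w, hac⟩
  obtain ⟨r, hr⟩ : ∃ r, (g b).1.1 ∆ (g d).1.1 = {r} := g.map_adj_iff.2 ⟨w, hbd⟩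
  rw [hp, hp', eq_of_symmDiff_square hp hp' hq hr hbc had]

theorem symmDiff_map_eq_of_notMem {v : VS} {a b c d : Comp ES s}
    (hva : v ∉ a.1.1) (hab : a.1.1 ∆ b.1.1 = {v}) (hvc : v ∉ c.1.1) (hcd : c.1.1 ∆ d.1.1 = {v}) :
    (g a).1.1 ∆ (g b).1.1 = (g c).1.1 ∆ (g d).1.1 := by
  have hIc : Indep ES (insert v c.1.1) := eq_insert_of_symmDiff_eq_singleton hvc hcd ▸ d.1.2
  induction hn : (a.1.1 ∆ c.1.1).ncard using Nat.strong_induction_on generalizing a b with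
  | _ n ih =>
  by_cases hac : a.1.1 = c.1.1
  · obtain rfl : a = c := Subtype.ext (Subtype.ext hac)
    obtain rfl : b = d :=
      Subtype.ext (Subtype.ext (symmDiff_right_injective _ (hab.trans hcd.symm)))
    rfl
  have hIa : Indep ES (insert v a.1.1) := eq_insert_of_symmDiff_eq_singleton hva hab ▸ b.1.2
  obtain ⟨w, hw, hwv, hI⟩ := exists_mem_symmDiff_indep_insert hva hvc hIa hIc hac
  let a' : Comp ES s := ⟨⟨a.1.1 ∆ {w}, hI.subset (Set.subset_insert _ _)⟩,
    mem_comp_of_finite_symmDiff a (by simp)⟩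
  have hva' : v ∉ a'.1.1 := by simp [a', Set.mem_symmDiff, hva, hwv.symm]
  let b' : Comp ES s := ⟨⟨insert v a'.1.1, hI⟩,
    mem_comp_of_finite_symmDiff a' (by simp [symmDiff_insert_of_notMem hva'])⟩
  have hlt : (a'.1.1 ∆ c.1.1).ncard < n := by
    rw [← hn, symmDiff_right_comm, symmDiff_of_ge (Set.singleton_subset_iff.2 hw)]
    exact Set.ncard_sdiff_singleton_lt_of_mem hw (finite_symmDiff_of_mem_comp a.2 c.2)
  calc (g a).1.1 ∆ (g b).1.1 = (g a').1.1 ∆ (g b').1.1 :=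
        symmDiff_map_eq_of_square g hab (symmDiff_insert_of_notMem hva')
          (symmDiff_symmDiff_cancel_left _ _) hwv.symm
    _ = (g c).1.1 ∆ (g d).1.1 := ih _ hlt hva' (symmDiff_insert_of_notMem hva') rfl

end Isomorphism

theorem stmt2_general {VS VT : Type*} (ES : Set (Finset VS)) (ET : Set (Finset VT))
    (s : Set VS) (t : Set VT)
    (g : GammaComp ES s ≃g GammaComp ET t)
    (v : VS) (fv : VT)
    (hxI : Indep ES (xset ES s v)) (hyI : Indep ES (yset ES s v))
    (hxC : (⟨xset ES s v, hxI⟩ : {u : Set VS // Indep ES u}) ∈ Comp ES s)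
    (hyC : (⟨yset ES s v, hyI⟩ : {u : Set VS // Indep ES u}) ∈ Comp ES s)
    (hdef : (g ⟨⟨xset ES s v, hxI⟩, hxC⟩).1.1 ∆ (g ⟨⟨yset ES s v, hyI⟩, hyC⟩).1.1 = {fv}) :
    ∀ (a b : Comp ES s), a.1.1 ∆ b.1.1 = {v} → (g a).1.1 ∆ (g b).1.1 = {fv} := by
  have hxy : xset ES s v ∆ yset ES s v = {v} := symmDiff_insert_of_notMem (notMem_xset s v)
  intro a b hab
  by_cases hva : v ∈ a.1.1
  · have hvb : v ∉ b.1.1 := fun hvb => (hab.ge rfl).elim (·.2 hvb) (·.2 hva)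
    rw [symmDiff_comm] at hab ⊢
    exact (symmDiff_map_eq_of_notMem g hvb hab (notMem_xset s v) hxy).trans hdef
  · exact (symmDiff_map_eq_of_notMem g hva hab (notMem_xset s v) hxy).trans hdef

theorem stmt2 {VS VT : Type*} (ES : Set (Finset VS)) (ET : Set (Finset VT))
    (hSsimp : SimpleHG ES) (hTsimp : SimpleHG ET) (hSlf : LocFin ES) (hTlf : LocFin ET)
    (s : Set VS) (t : Set VT) (hs : Indep ES s) (ht : Indep ET t)
    (g : GammaComp ES s ≃g GammaComp ET t)
    (v : VS) (fv : VT)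
    (hxI : Indep ES (xset ES s v)) (hyI : Indep ES (yset ES s v))
    (hxC : (⟨xset ES s v, hxI⟩ : {u : Set VS // Indep ES u}) ∈ Comp ES s)
    (hyC : (⟨yset ES s v, hyI⟩ : {u : Set VS // Indep ES u}) ∈ Comp ES s)
    (hdef : (g ⟨⟨xset ES s v, hxI⟩, hxC⟩).1.1 ∆ (g ⟨⟨yset ES s v, hyI⟩, hyC⟩).1.1 = {fv}) :
    ∀ (a b : Comp ES s), a.1.1 ∆ b.1.1 = {v} → (g a).1.1 ∆ (g b).1.1 = {fv} :=
  stmt2_general ES ET s t g v fv hxI hyI hxC hyC hdef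
end

section
/- Let S and T be simple, locally finite hypergraphs and g an isomorphism from a connected component Γ_S(s) of Γ_S to a connected component Γ_T(t) of Γ_T with g(s) = t. Define f(v) by {f(v)} = g(x_s(v)) ⊕ g(y_s(v)). Then f is a bijection from the vertex set of S to the vertex set of T. -/
open scoped symmDiff

variable {V : Type*}

/-! Within a component of `Γ`, the graph distance between `p` and `q` is `|p ∆ q|`, so `g`
preserves these cardinalities. They detect whether two edges `a – b` and `c – d` of `Γ`, flipping
vertices `x` and `y`, have the same label: with `M = a ∆ c`, the four distances are the sizes of
`M`, `M ∆ {x}`, `M ∆ {y}`, `M ∆ {x} ∆ {y}`, and toggling `x` and `y` changes `|M|` additively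
unless `x = y`, when the second toggle undoes the first. So `g` preserves equality of labels,
which makes `f` injective; pulling back the edge `x_t(w) – y_t(w)` of `Γ_T` shows `w` is hit. -/

namespace Set

variable {α : Type*}

theorem ncard_symmDiff_le_add {a b c : Set α} (hab : (a ∆ b).Finite) (hbc : (b ∆ c).Finite) :
    (a ∆ c).ncard ≤ (a ∆ b).ncard + (b ∆ c).ncard :=
  (ncard_le_ncard (symmDiff_triangle a b c) (hab.union hbc)).trans (ncard_union_le _ _)

theorem symmDiff_singleton_of_mem {M : Set α} {x : α} (hx : x ∈ M) : M ∆ {x} = M \ {x} := by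
  ext y; by_cases hy : y = x <;> simp [mem_symmDiff, hy, hx]

theorem symmDiff_singleton_of_notMem {M : Set α} {x : α} (hx : x ∉ M) : M ∆ {x} = insert x M := by
  ext y; by_cases hy : y = x <;> simp [mem_symmDiff, hy, hx]

open Classical in
theorem ncard_symmDiff_singleton {M : Set α} (hM : M.Finite) (x : α) :
    ((M ∆ {x}).ncard : ℤ) = M.ncard + if x ∈ M then -1 else 1 := by
  split_ifs with hx
  · rw [symmDiff_singleton_of_mem hx, ← ncard_sdiff_singleton_add_one hx hM]
    push_cast; ring
  · rw [symmDiff_singleton_of_notMem hx, ncard_insert_of_notMem hx hM]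
    push_cast; ring

theorem eq_iff_ncard_symmDiff_singleton_ne {M : Set α} (hM : M.Finite) {x y : α} :
    x = y ↔ (M ∆ {x} ∆ {y}).ncard + M.ncard ≠ (M ∆ {x}).ncard + (M ∆ {y}).ncard := by
  by_cases hxy : x = y
  · subst hxy
    simp only [symmDiff_symmDiff_cancel_right, true_iff]
    zify
    rw [ncard_symmDiff_singleton hM]
    split_ifs <;> omega
  · have hy : y ∈ M ∆ {x} ↔ y ∈ M := by
      simp [mem_symmDiff, Ne.symm hxy]
    simp only [hxy, false_iff, not_not]
    zify
    rw [ncard_symmDiff_singleton ((hM.union (finite_singleton x)).subset symmDiff_subset_union),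
      ncard_symmDiff_singleton hM, ncard_symmDiff_singleton hM, hy]
    ring

theorem eq_iff_of_symmDiff_eq_singleton {a b c d : Set α} {x y : α} (hac : (a ∆ c).Finite)
    (hab : a ∆ b = {x}) (hcd : c ∆ d = {y}) :
    x = y ↔ (b ∆ d).ncard + (a ∆ c).ncard ≠ (b ∆ c).ncard + (a ∆ d).ncard := by
  rw [← symmDiff_symmDiff_cancel_left a b, ← symmDiff_symmDiff_cancel_left c d, hab, hcd,
    eq_iff_ncard_symmDiff_singleton_ne hac]
  have e1 : a ∆ {x} ∆ (c ∆ {y}) = a ∆ c ∆ {x} ∆ {y} := by ac_rfl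
  have e2 : a ∆ {x} ∆ c = a ∆ c ∆ {x} := by ac_rfl
  have e3 : a ∆ (c ∆ {y}) = a ∆ c ∆ {y} := by ac_rfl
  rw [e1, e2, e3]

end Set

section Hypergraph

variable {E : Set (Finset V)} {s : Set V}

theorem Indep.mono_s3 {u : Set V} (hs : Indep E s) (hus : u ⊆ s) : Indep E u :=
  fun e he heu => hs e he (heu.trans hus)

theorem Indep.xset (hs : Indep E s) (v : V) : Indep E (xset E s v) :=
  hs.mono_s3 Set.sdiff_subset

theorem Indep.yset (hcard : ∀ e ∈ E, 1 < e.card) (hs : Indep E s) (v : V) :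
    Indep E (yset E s v) := by
  intro e he hey
  by_cases hv : v ∈ e
  · obtain ⟨w, hw, hwv⟩ := Finset.exists_mem_ne (hcard e he) v
    rcases hey (Finset.mem_coe.2 hw) with rfl | hwx
    · exact hwv rfl
    · exact hwx.2 (Or.inr ⟨e, he, hv, hw⟩)
  · refine hs e he fun w hw => ?_
    rcases hey hw with rfl | hwx
    · exact absurd hw hv
    · exact hwx.1

theorem finite_nbr (hlf : LocFin E) (v : V) : {w | Nbr E v w}.Finite := by
  refine ((hlf v).biUnion fun e _ => e.finite_toSet).subset ?_
  rintro w ⟨e, he, hve, hwe⟩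
  exact Set.mem_biUnion ⟨he, hve⟩ hwe

theorem finite_symmDiff_xset (hlf : LocFin E) (v : V) : (s ∆ xset E s v).Finite := by
  refine ((finite_nbr hlf v).insert v).subset fun w hw => ?_
  rcases Set.mem_symmDiff.1 hw with ⟨hws, hwx⟩ | ⟨hwx, hws⟩
  · by_contra hw'
    exact hwx ⟨hws, hw'⟩
  · exact absurd hwx.1 hws

theorem yset_eq_symmDiff (v : V) : yset E s v = xset E s v ∆ {v} :=
  (Set.symmDiff_singleton_of_notMem fun h => h.2 (Set.mem_insert v _)).symm

theorem xset_symmDiff_yset (v : V) : xset E s v ∆ yset E s v = {v} := by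
  rw [yset_eq_symmDiff, symmDiff_symmDiff_cancel_left]

theorem finite_symmDiff_yset (hlf : LocFin E) (v : V) : (s ∆ yset E s v).Finite := by
  rw [yset_eq_symmDiff, ← symmDiff_assoc]
  exact ((finite_symmDiff_xset hlf v).union (Set.finite_singleton v)).subset
    Set.symmDiff_subset_union

theorem Comp.finite_symmDiff {p q : {u : Set V // Indep E u}} (hp : p ∈ Comp E s)
    (hq : q ∈ Comp E s) : (p.1 ∆ q.1).Finite := by
  have h := symmDiff_triangle p.1 s q.1
  rw [symmDiff_comm p.1 s] at h
  exact (hp.union hq).subset h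

def xsetComp (hs : Indep E s) (hlf : LocFin E) (v : V) : Comp E s :=
  ⟨⟨xset E s v, hs.xset v⟩, finite_symmDiff_xset hlf v⟩

def ysetComp (hcard : ∀ e ∈ E, 1 < e.card) (hs : Indep E s) (hlf : LocFin E) (v : V) :
    Comp E s :=
  ⟨⟨yset E s v, hs.yset hcard v⟩, finite_symmDiff_yset hlf v⟩

namespace GammaComp

theorem adj_iff {p q : Comp E s} : (GammaComp E s).Adj p q ↔ ∃ v, p.1.1 ∆ q.1.1 = {v} :=
  Iff.rfl

theorem ncard_symmDiff_le_length {p q : Comp E s} (W : (GammaComp E s).Walk p q) :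
    (p.1.1 ∆ q.1.1).ncard ≤ W.length := by
  induction W with
  | nil => simp
  | @cons a b c hab W ih =>
    obtain ⟨x, hx⟩ := adj_iff.1 hab
    calc (a.1.1 ∆ c.1.1).ncard ≤ (a.1.1 ∆ b.1.1).ncard + (b.1.1 ∆ c.1.1).ncard :=
          Set.ncard_symmDiff_le_add (hx ▸ Set.finite_singleton x) (Comp.finite_symmDiff b.2 c.2)
      _ ≤ (W.cons hab).length := by
          rw [hx, Set.ncard_singleton, SimpleGraph.Walk.length_cons]
          omega

theorem exists_adj_ncard_symmDiff {p q : Comp E s} (hpq : p ≠ q) :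
    ∃ p' : Comp E s, (GammaComp E s).Adj p p' ∧
      (p'.1.1 ∆ q.1.1).ncard + 1 = (p.1.1 ∆ q.1.1).ncard := by
  obtain ⟨v, hv, hI⟩ : ∃ v ∈ p.1.1 ∆ q.1.1, Indep E (p.1.1 ∆ {v}) := by
    by_cases hd : (p.1.1 \ q.1.1).Nonempty
    · obtain ⟨v, hv⟩ := hd
      refine ⟨v, Or.inl hv, p.1.2.mono_s3 ?_⟩
      rw [Set.symmDiff_singleton_of_mem hv.1]
      exact Set.sdiff_subset
    · have hsub : p.1.1 ⊆ q.1.1 := Set.sdiff_eq_empty.1 (Set.not_nonempty_iff_eq_empty.1 hd)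
      obtain ⟨v, hvq, hvp⟩ : (q.1.1 \ p.1.1).Nonempty := by
        rw [Set.nonempty_iff_ne_empty, Ne, Set.sdiff_eq_empty]
        exact fun hqp => hpq (Subtype.ext (Subtype.ext (hsub.antisymm hqp)))
      refine ⟨v, Or.inr ⟨hvq, hvp⟩, q.1.2.mono_s3 ?_⟩
      rw [Set.symmDiff_singleton_of_notMem hvp]
      exact Set.insert_subset hvq hsub
  have hC : (⟨p.1.1 ∆ {v}, hI⟩ : {u : Set V // Indep E u}) ∈ Comp E s := by
    show (s ∆ (p.1.1 ∆ {v})).Finite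
    rw [← symmDiff_assoc]
    exact (p.2.union (Set.finite_singleton v)).subset Set.symmDiff_subset_union
  refine ⟨⟨⟨_, hI⟩, hC⟩, ⟨v, symmDiff_symmDiff_cancel_left _ _⟩, ?_⟩
  show (p.1.1 ∆ {v} ∆ q.1.1).ncard + 1 = _
  rw [symmDiff_right_comm, Set.symmDiff_singleton_of_mem hv]
  exact Set.ncard_sdiff_singleton_add_one hv (Comp.finite_symmDiff p.2 q.2)

theorem exists_walk_length_eq (p q : Comp E s) :
    ∃ W : (GammaComp E s).Walk p q, W.length = (p.1.1 ∆ q.1.1).ncard := by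
  induction hn : (p.1.1 ∆ q.1.1).ncard generalizing p with
  | zero =>
    have hpq : p = q := Subtype.ext <| Subtype.ext <| symmDiff_eq_bot.1 <|
      (Set.ncard_eq_zero (Comp.finite_symmDiff p.2 q.2)).1 hn
    subst hpq
    exact ⟨.nil, rfl⟩
  | succ n ih =>
    have hpq : p ≠ q := by
      rintro rfl
      simp at hn
    obtain ⟨p', hadj, hp'⟩ := exists_adj_ncard_symmDiff hpq
    obtain ⟨W, hW⟩ := ih p' (by omega)
    exact ⟨.cons hadj W, by rw [SimpleGraph.Walk.length_cons, hW]⟩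

end GammaComp

end Hypergraph

namespace GammaComp

variable {VS VT : Type*} {ES : Set (Finset VS)} {ET : Set (Finset VT)} {s : Set VS} {t : Set VT}

theorem ncard_symmDiff_iso_le (g : GammaComp ES s ≃g GammaComp ET t) (p q : Comp ES s) :
    ((g p).1.1 ∆ (g q).1.1).ncard ≤ (p.1.1 ∆ q.1.1).ncard := by
  obtain ⟨W, hW⟩ := exists_walk_length_eq p q
  simpa [hW] using ncard_symmDiff_le_length (W.map g.toEmbedding.toHom)

theorem ncard_symmDiff_iso (g : GammaComp ES s ≃g GammaComp ET t) (p q : Comp ES s) :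
    ((g p).1.1 ∆ (g q).1.1).ncard = (p.1.1 ∆ q.1.1).ncard :=
  (ncard_symmDiff_iso_le g p q).antisymm <| by
    simpa using ncard_symmDiff_iso_le g.symm (g p) (g q)

theorem eq_iff_eq_of_iso (g : GammaComp ES s ≃g GammaComp ET t) {a b c d : Comp ES s}
    {x y : VS} {x' y' : VT} (hab : a.1.1 ∆ b.1.1 = {x}) (hcd : c.1.1 ∆ d.1.1 = {y})
    (hab' : (g a).1.1 ∆ (g b).1.1 = {x'}) (hcd' : (g c).1.1 ∆ (g d).1.1 = {y'}) :
    x = y ↔ x' = y' := by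
  rw [Set.eq_iff_of_symmDiff_eq_singleton (Comp.finite_symmDiff a.2 c.2) hab hcd,
    Set.eq_iff_of_symmDiff_eq_singleton (Comp.finite_symmDiff (g a).2 (g c).2) hab' hcd']
  simp only [ncard_symmDiff_iso]

end GammaComp

theorem stmt3_general {VS VT : Type*} (ES : Set (Finset VS)) (ET : Set (Finset VT))
    (hSsimp : SimpleHG ES) (hTsimp : SimpleHG ET) (hSlf : LocFin ES) (hTlf : LocFin ET)
    (s : Set VS) (t : Set VT) (hs : Indep ES s) (ht : Indep ET t)
    (g : GammaComp ES s ≃g GammaComp ET t)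
    (f : VS → VT)
    (hf : ∀ (v : VS) (hxI : Indep ES (xset ES s v)) (hyI : Indep ES (yset ES s v))
      (hxC : (⟨xset ES s v, hxI⟩ : {u : Set VS // Indep ES u}) ∈ Comp ES s)
      (hyC : (⟨yset ES s v, hyI⟩ : {u : Set VS // Indep ES u}) ∈ Comp ES s),
      (g ⟨⟨xset ES s v, hxI⟩, hxC⟩).1.1 ∆ (g ⟨⟨yset ES s v, hyI⟩, hyC⟩).1.1 = {f v}) :
    Function.Bijective f := by
  have hxy : ∀ v, (xsetComp hs hSlf v).1.1 ∆ (ysetComp hSsimp.1 hs hSlf v).1.1 = {v} :=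
    xset_symmDiff_yset
  have hfv : ∀ v, (g (xsetComp hs hSlf v)).1.1 ∆ (g (ysetComp hSsimp.1 hs hSlf v)).1.1 = {f v} :=
    fun v => hf v _ _ _ _
  refine ⟨fun u v huv => ?_, fun w => ?_⟩
  · exact (GammaComp.eq_iff_eq_of_iso g (hxy u) (hxy v) (hfv u) (hfv v)).2 huv
  · set X := xsetComp ht hTlf w
    set Y := ysetComp hTsimp.1 ht hTlf w
    obtain ⟨v, hv⟩ : (GammaComp ES s).Adj (g.symm X) (g.symm Y) :=
      g.symm.map_adj_iff.2 ⟨w, xset_symmDiff_yset w⟩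
    refine ⟨v, (GammaComp.eq_iff_eq_of_iso g (hxy v) hv (hfv v) ?_).1 rfl⟩
    rw [g.apply_symm_apply, g.apply_symm_apply]
    exact xset_symmDiff_yset w

theorem stmt3 {VS VT : Type*} (ES : Set (Finset VS)) (ET : Set (Finset VT))
    (hSsimp : SimpleHG ES) (hTsimp : SimpleHG ET) (hSlf : LocFin ES) (hTlf : LocFin ET)
    (s : Set VS) (t : Set VT) (hs : Indep ES s) (ht : Indep ET t)
    (g : GammaComp ES s ≃g GammaComp ET t)
    (hsC : (⟨s, hs⟩ : {u : Set VS // Indep ES u}) ∈ Comp ES s)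
    (hgst : (g ⟨⟨s, hs⟩, hsC⟩).1.1 = t)
    (f : VS → VT)
    (hf : ∀ (v : VS) (hxI : Indep ES (xset ES s v)) (hyI : Indep ES (yset ES s v))
      (hxC : (⟨xset ES s v, hxI⟩ : {u : Set VS // Indep ES u}) ∈ Comp ES s)
      (hyC : (⟨yset ES s v, hyI⟩ : {u : Set VS // Indep ES u}) ∈ Comp ES s),
      (g ⟨⟨xset ES s v, hxI⟩, hxC⟩).1.1 ∆ (g ⟨⟨yset ES s v, hyI⟩, hyC⟩).1.1 = {f v}) :
    Function.Bijective f :=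
  stmt3_general ES ET hSsimp hTsimp hSlf hTlf s t hs ht g f hf
end

section
/- Let S be a locally finite hypergraph, s an independent subset of S, and a a finite subset of the vertices of S. Then there exists an independent set r with finite symmetric difference from s (i.e., r ∈ Γ_S(s)) such that r contains no element of a and no neighbor of any element of a. -/
open scoped symmDiff

variable {V : Type*}

/-
The set `s` minus `a` and all neighbours of `a` is independent (a subset of an independent set)
and differs from `s` only inside `a` together with its neighbours, which is finite because each
vertex of `a` lies in finitely many edges, each of them finite.
-/

theorem Indep.anti {E : Set (Finset V)} {s t : Set V} (hs : Indep E s) (hts : t ⊆ s) :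
    Indep E t :=
  fun e he het => hs e he (het.trans hts)

theorem LocFin.finite_setOf_nbr {E : Set (Finset V)} (hlf : LocFin E) (v : V) :
    {w | Nbr E v w}.Finite := by
  refine ((hlf v).biUnion fun e _ => e.finite_toSet).subset ?_
  rintro w ⟨e, he, hve, hwe⟩
  exact Set.mem_biUnion ⟨he, hve⟩ hwe

theorem LocFin.finite_setOf_exists_nbr {E : Set (Finset V)} (hlf : LocFin E) {a : Set V}
    (ha : a.Finite) : {v | ∃ w ∈ a, Nbr E w v}.Finite := by
  refine (ha.biUnion fun w _ => hlf.finite_setOf_nbr w).subset ?_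
  rintro v ⟨w, hw, hwv⟩
  exact Set.mem_biUnion hw hwv

theorem Set.finite_symmDiff_sdiff {s t : Set V} (ht : t.Finite) : (s ∆ (s \ t)).Finite := by
  rw [symmDiff_of_ge Set.sdiff_subset, Set.sdiff_sdiff_right_self]
  exact ht.inter_of_right s

theorem stmt6 (E : Set (Finset V)) (hlf : LocFin E) (s : Set V) (hs : Indep E s)
    (a : Set V) (ha : a.Finite) :
    ∃ r : Set V, Indep E r ∧ (s ∆ r).Finite ∧ (∀ w ∈ a, w ∉ r) ∧
      ∀ w ∈ a, ∀ v, Nbr E w v → v ∉ r := by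
  refine ⟨s \ (a ∪ {v | ∃ w ∈ a, Nbr E w v}), hs.anti Set.sdiff_subset,
    Set.finite_symmDiff_sdiff (ha.union (hlf.finite_setOf_exists_nbr ha)), ?_, ?_⟩
  · exact fun w hw hr => hr.2 (Or.inl hw)
  · exact fun w hw v hwv hr => hr.2 (Or.inr ⟨w, hw, hwv⟩)
end

section
/- Let S be a simple, locally finite hypergraph with no isolated vertices, let s be an independent subset, and let b be a subset of V(S) such that for every independent set r with finite symmetric difference from s, the set r ⊕ b is also independent. Then b = ∅. -/
open scoped symmDiff

variable {V : Type*}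

/-!
Suppose `v ∈ b` and let `e` be an edge through `v`. Let `N` be the union of all edges meeting `e`,
a finite set by local finiteness, and put `r = (s \ N) ∪ (e \ b)`. An edge inside `r` either lies
in `s` or meets `e`; in the latter case it lies in `N`, hence in `e \ b ⊊ e`, which simplicity
forbids. So `r` is independent and differs from `s` only inside `N`, yet `e ⊆ r ∆ b`.
-/

def nbhdSet (E : Set (Finset V)) (t : Set V) : Set V := {w | ∃ v ∈ t, Nbr E v w}

theorem subset_nbhdSet_of_mem {E : Set (Finset V)} {f : Finset V} (hf : f ∈ E) {t : Set V}
    {w : V} (hw : w ∈ f) (hwt : w ∈ t) : (f : Set V) ⊆ nbhdSet E t :=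
  fun _ hx => ⟨w, hwt, f, hf, hw, hx⟩

theorem LocFin.finite_nbhdSet {E : Set (Finset V)} (hlf : LocFin E) {t : Set V}
    (ht : t.Finite) : (nbhdSet E t).Finite := by
  have hN : nbhdSet E t = ⋃ v ∈ t, ⋃ f ∈ {f ∈ E | v ∈ f}, (f : Set V) := by
    ext w
    simp only [nbhdSet, Nbr, Set.mem_ofPred_eq, Set.mem_iUnion, Finset.mem_coe, exists_prop]
    grind
  rw [hN]
  exact ht.biUnion fun v _ => (hlf v).biUnion fun f _ => f.finite_toSet

theorem indep_diff_nbhdSet_union {E : Set (Finset V)}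
    (hanti : ∀ e ∈ E, ∀ e' ∈ E, e ⊆ e' → e = e') {s : Set V} (hs : Indep E s)
    {e : Finset V} (he : e ∈ E) {u : Set V} (hue : u ⊆ e) (heu : ¬ (e : Set V) ⊆ u) :
    Indep E (s \ nbhdSet E e ∪ u) := by
  intro f hf hfr
  by_cases hfs : (f : Set V) ⊆ s \ nbhdSet E e
  · exact hs f hf (hfs.trans Set.sdiff_subset)
  obtain ⟨w, hwf, hw⟩ := Set.not_subset.1 hfs
  have hwu : w ∈ u := (hfr hwf).resolve_left hw
  have hfN : (f : Set V) ⊆ nbhdSet E e := subset_nbhdSet_of_mem hf hwf (hue hwu)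
  have hfu : (f : Set V) ⊆ u := fun x hx => (hfr hx).resolve_left fun h => h.2 (hfN hx)
  have hfe : f = e := hanti f hf e he (Finset.coe_subset.1 (hfu.trans hue))
  exact heu (hfe ▸ hfu)

theorem symmDiff_diff_union_subset {s A u : Set V} (hu : u ⊆ A) : s ∆ (s \ A ∪ u) ⊆ A := by
  intro x hx
  rcases Set.mem_symmDiff.1 hx with ⟨hxs, hxr⟩ | ⟨hxr, hxs⟩
  · by_contra hxA
    exact hxr (Or.inl ⟨hxs, hxA⟩)
  · exact hxr.elim (fun h => absurd h.1 hxs) (fun h => hu h)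

theorem subset_symmDiff_diff_union_diff {s A e b : Set V} (he : e ⊆ A) :
    e ⊆ (s \ A ∪ e \ b) ∆ b := by
  intro w hw
  by_cases hwb : w ∈ b
  · exact Set.mem_symmDiff.2 (Or.inr ⟨hwb, fun h => h.elim (fun h => h.2 (he hw)) (·.2 hwb)⟩)
  · exact Set.mem_symmDiff.2 (Or.inl ⟨Or.inr ⟨hw, hwb⟩, hwb⟩)

theorem stmt9 (E : Set (Finset V)) (hsimp : SimpleHG E) (hlf : LocFin E)
    (hni : ∀ v : V, ∃ e ∈ E, v ∈ e)
    (s : Set V) (hs : Indep E s) (b : Set V)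
    (hb : ∀ r : Set V, Indep E r → (s ∆ r).Finite → Indep E (r ∆ b)) :
    b = ∅ := by
  by_contra hne
  obtain ⟨v, hvb⟩ := Set.nonempty_iff_ne_empty.2 hne
  obtain ⟨e, he, hve⟩ := hni v
  have heN : (e : Set V) ⊆ nbhdSet E e := subset_nbhdSet_of_mem he hve hve
  have hr : Indep E (s \ nbhdSet E e ∪ (e : Set V) \ b) :=
    indep_diff_nbhdSet_union hsimp.2 hs he Set.sdiff_subset fun h => (h hve).2 hvb
  have hfin : (s ∆ (s \ nbhdSet E e ∪ (e : Set V) \ b)).Finite :=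
    (hlf.finite_nbhdSet e.finite_toSet).subset
      (symmDiff_diff_union_subset (Set.sdiff_subset.trans heN))
  exact hb _ hr hfin e he (subset_symmDiff_diff_union_diff heN)
end

section
/- Let g be a graph isomorphism between two graphs whose vertices are sets, with adjacency given by symmetric difference of size one, and suppose x₀, x₁, y₀, y₁ form a 4-cycle with x₀ ⊕ y₀ = {v}, x₁ ⊕ y₁ = {v}, x₀ ⊕ x₁ = {w}, y₀ ⊕ y₁ = {w} where v ≠ w. If g(x₀) ⊕ g(y₀) = {u}, then g(x₁) ⊕ g(y₁) = {u} as well. (Images of opposite edges of a 4-cycle in a hypercube-like graph under an isomorphism differ by the same element.) -/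
open scoped symmDiff

variable {V : Type*}

def Cube (α : Type*) : SimpleGraph (Set α) where
  Adj s t := ∃ v, s ∆ t = {v}
  symm := ⟨fun s t ⟨v, h⟩ => ⟨v, by rwa [symmDiff_comm]⟩⟩
  loopless := ⟨fun s ⟨v, h⟩ => by
    rw [symmDiff_self] at h
    exact absurd h.symm (Set.singleton_ne_empty v)⟩

/-
An isomorphism of induced subcube graphs maps the square `x₀ x₁ y₁ y₀` to a 4-cycle whose
diagonals still join distinct vertices, since `x₀ ∆ y₁ = x₁ ∆ y₀ = {v, w}` is nonempty. In a
4-cycle `p q r s` of the cube the two ways of going from `q` to `s` give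
`{b} ∆ {c} = q ∆ s = {a} ∆ {d}` for the edge labels `a b c d`; as `q ≠ s` this set is `{b, c}`,
and as `p ≠ r` the label `b` differs from `a`, so `b = d`: opposite edges carry the same label.
-/

theorem symmDiff_symmDiff_symmDiff_cancel_middle {γ : Type*} [GeneralizedBooleanAlgebra γ]
    (a b c : γ) : a ∆ b ∆ (b ∆ c) = a ∆ c := by
  rw [symmDiff_assoc, symmDiff_symmDiff_cancel_left]

namespace Set

variable {γ : Type*} {p q r s : Set γ} {a b c d : γ}

theorem eq_iff_of_symmDiff_eq_singleton_s15 (hpq : p ∆ q = {a}) (hqr : q ∆ r = {b}) :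
    p = r ↔ a = b := by
  rw [← symmDiff_eq_bot, ← symmDiff_symmDiff_symmDiff_cancel_middle p q r, hpq, hqr,
    symmDiff_eq_bot, singleton_eq_singleton_iff]

theorem eq_of_singleton_symmDiff_singleton_eq (hab : a ≠ b) (hac : a ≠ c)
    (h : ({a} : Set γ) ∆ {b} = {c} ∆ {d}) : a = d := by
  have ha : a ∈ ({c} : Set γ) ∆ {d} := by
    rw [← h]
    simp [mem_symmDiff, hab]
  simp_all [mem_symmDiff]

end Set

namespace Cube

variable {γ : Type*} {p q r s : Set γ}

theorem symmDiff_eq_of_isCycle_four (hpq : (Cube γ).Adj p q) (hqr : (Cube γ).Adj q r)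
    (hrs : (Cube γ).Adj r s) (hsp : (Cube γ).Adj s p) (hpr : p ≠ r) (hqs : q ≠ s) :
    q ∆ r = p ∆ s := by
  obtain ⟨a, ha⟩ := hpq
  obtain ⟨b, hb⟩ := hqr
  obtain ⟨c, hc⟩ := hrs
  obtain ⟨d, hd⟩ := hsp
  rw [symmDiff_comm] at hd
  have hab : b ≠ a := fun h ↦ hpr ((Set.eq_iff_of_symmDiff_eq_singleton_s15 ha hb).2 h.symm)
  have hbc : b ≠ c := fun h ↦ hqs ((Set.eq_iff_of_symmDiff_eq_singleton_s15 hb hc).2 h)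
  have hdiag : ({b} : Set γ) ∆ {c} = {a} ∆ {d} := by
    rw [← hb, ← hc, ← ha, ← hd, symmDiff_symmDiff_symmDiff_cancel_middle, symmDiff_comm p q,
      symmDiff_symmDiff_symmDiff_cancel_middle]
  rw [hb, hd, Set.eq_of_singleton_symmDiff_singleton_eq hbc hab hdiag]

end Cube

theorem stmt15 {α β : Type*} (A : Set (Set α)) (B : Set (Set β))
    (g : (Cube α).induce A ≃g (Cube β).induce B)
    (x₀ x₁ y₀ y₁ : A) (v w : α) (hvw : v ≠ w)
    (h1 : x₀.1 ∆ y₀.1 = {v}) (h2 : x₁.1 ∆ y₁.1 = {v})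
    (h3 : x₀.1 ∆ x₁.1 = {w}) (h4 : y₀.1 ∆ y₁.1 = {w})
    (u : β) (hu : (g x₀).1 ∆ (g y₀).1 = {u}) :
    (g x₁).1 ∆ (g y₁).1 = {u} := by
  have hx₁y₀ : x₁ ≠ y₀ := Subtype.coe_ne_coe.1 <|
    (Set.eq_iff_of_symmDiff_eq_singleton_s15 (by rwa [symmDiff_comm]) h1).not.2 hvw.symm
  have hy₁x₀ : y₁ ≠ x₀ := Subtype.coe_ne_coe.1 <|
    (Set.eq_iff_of_symmDiff_eq_singleton_s15 (by rwa [symmDiff_comm]) (by rwa [symmDiff_comm])).not.2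
      hvw.symm
  rw [← hu]
  refine Cube.symmDiff_eq_of_isCycle_four (g.map_adj_iff.2 ⟨w, h3⟩) (g.map_adj_iff.2 ⟨v, h2⟩)
    (g.map_adj_iff.2 ⟨w, by rwa [symmDiff_comm]⟩) (g.map_adj_iff.2 ⟨v, by rwa [symmDiff_comm]⟩)
    ?_ ?_
  · exact Subtype.coe_ne_coe.2 (g.injective.ne hy₁x₀.symm)
  · exact Subtype.coe_ne_coe.2 (g.injective.ne hx₁y₀)
end
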